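/- arXiv:2103.05539 — 2 statements merged into one kernel-verified Lean document; each statement's English description precedes it below -/
import Mathlib

section
/- Let H be a complex Hilbert space and b : H × H → ℂ a bounded sesquilinear form satisfying the inf-sup condition with constant C > 0 and, symmetrically, sup_{u≠0} Re b(u,v)/(‖u‖‖v‖) > 0 for every v ≠ 0. Then for every bounded conjugate-linear functional ℓ there exists a unique u ∈ H with b(u,v) = ℓ(v) for all v ∈ H, and ‖u‖ ≤ C⁻¹‖ℓ‖. -/
/-!
The bounded form `b` is represented by an operator `A` with `b u v = ⟪v, A u⟫`. The inf-sup
condition says exactly that `C ‖u‖ ≤ ‖A u‖`, so `A` is injective with closed range, while the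
transposed condition says that the range of `A` has trivial orthogonal complement. Hence `A` is
bijective; writing `ℓ v = ⟪v, f⟫` by the Riesz representation theorem, the solution is `A⁻¹ f`,
of norm at most `C⁻¹ ‖f‖ = C⁻¹ ‖ℓ‖`.
-/

open InnerProductSpace ComplexConjugate

theorem mul_norm_le_of_le_iSup_div {E : Type*} [NormedAddCommGroup E] {u : E} (hu : u ≠ 0)
    (f : E → ℝ) {C K : ℝ} (hf : ∀ v, f v ≤ K * ‖v‖)
    (hC : C ≤ ⨆ v : {v : E // v ≠ 0}, f v / (‖u‖ * ‖v.1‖)) :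
    C * ‖u‖ ≤ K := by
  have hu' : 0 < ‖u‖ := norm_pos_iff.mpr hu
  have : Nonempty {v : E // v ≠ 0} := ⟨⟨u, hu⟩⟩
  have hsup : (⨆ v : {v : E // v ≠ 0}, f v / (‖u‖ * ‖v.1‖)) ≤ K / ‖u‖ := by
    refine ciSup_le fun ⟨v, hv⟩ => ?_
    rw [div_le_div_iff₀ (by positivity) hu']
    calc f v * ‖u‖ ≤ K * ‖v‖ * ‖u‖ := mul_le_mul_of_nonneg_right (hf v) hu'.le
      _ = K * (‖u‖ * ‖v‖) := by ring
  exact (le_div_iff₀ hu').mp (hC.trans hsup)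

section

variable {𝕜 E : Type*} [RCLike 𝕜] [NormedAddCommGroup E] [InnerProductSpace 𝕜 E] [CompleteSpace E]

theorem exists_sesqForm_eq_inner_of_bound (b : E →ₗ[𝕜] E →ₛₗ[starRingEnd 𝕜] 𝕜) (M : ℝ)
    (hb : ∀ u v, ‖b u v‖ ≤ M * ‖u‖ * ‖v‖) :
    ∃ A : E →L[𝕜] E, ∀ u v, b u v = ⟪v, A u⟫_𝕜 := by
  let B : E →L⋆[𝕜] E →L[𝕜] 𝕜 := LinearMap.mkContinuous₂
    (LinearMap.mk₂'ₛₗ (starRingEnd 𝕜) (RingHom.id 𝕜) (fun u v => conj (b u v))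
      (by simp) (by simp) (by simp) (by simp)) M (by simpa using hb)
  refine ⟨continuousLinearMapOfBilin B, fun u v => ?_⟩
  rw [← inner_conj_symm, continuousLinearMapOfBilin_apply]
  simp [B]

theorem exists_conjLinear_eq_inner (ℓ : E →SL[starRingEnd 𝕜] 𝕜) :
    ∃ f : E, (∀ v, ℓ v = ⟪v, f⟫_𝕜) ∧ ‖f‖ = ‖ℓ‖ := by
  let φ : E →L[𝕜] 𝕜 := (starL 𝕜 : 𝕜 ≃L⋆[𝕜] 𝕜).toContinuousLinearMap.comp ℓ
  refine ⟨(toDual 𝕜 E).symm φ, fun v => ?_, ?_⟩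
  · rw [← inner_conj_symm, toDual_symm_apply]
    simp [φ]
  · rw [LinearIsometryEquiv.norm_map]
    exact (starₗᵢ 𝕜 : 𝕜 ≃ₗᵢ⋆[𝕜] 𝕜).toLinearIsometry.norm_toContinuousLinearMap_comp

theorem ContinuousLinearMap.surjective_of_antilipschitz_of_orthogonal_eq_bot {F : Type*}
    [NormedAddCommGroup F] [InnerProductSpace 𝕜 F] (T : E →L[𝕜] F) {K : NNReal}
    (hT : AntilipschitzWith K T) (hperp : T.rangeᗮ = ⊥) : Function.Surjective T := by
  have : CompleteSpace T.range := (hT.isComplete_range T.uniformContinuous).completeSpace_coe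
  exact LinearMap.range_eq_top.mp (Submodule.orthogonal_eq_bot_iff.mp hperp)

end

/-- Banach–Nečas–Babuška theorem in Hilbert spaces.  If the bounded
sesquilinear form `b` satisfies the inf-sup condition with constant `C > 0` and the
transposed nondegeneracy condition, then for every bounded conjugate-linear functional
`ℓ` there is a unique `u` with `b(u,v) = ℓ(v)` for all `v`, and `‖u‖ ≤ C⁻¹‖ℓ‖`. -/
theorem banach_necas_babuska
    {V : Type*} [NormedAddCommGroup V] [InnerProductSpace ℂ V] [CompleteSpace V]
    (b : V →ₗ[ℂ] V →ₛₗ[starRingEnd ℂ] ℂ)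
    (M : ℝ) (hbdd : ∀ u v : V, ‖b u v‖ ≤ M * ‖u‖ * ‖v‖)
    (C : ℝ) (hC : 0 < C)
    (hinfsup : ∀ u : V, u ≠ 0 →
      C ≤ ⨆ v : {v : V // v ≠ 0}, (b u v.1).re / (‖u‖ * ‖v.1‖))
    (htrans : ∀ v : V, v ≠ 0 →
      0 < ⨆ u : {u : V // u ≠ 0}, (b u.1 v).re / (‖u.1‖ * ‖v‖))
    (ℓ : V →SL[starRingEnd ℂ] ℂ) :
    ∃ u : V, (∀ v : V, b u v = ℓ v) ∧ ‖u‖ ≤ C⁻¹ * ‖ℓ‖ ∧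
      ∀ u' : V, (∀ v : V, b u' v = ℓ v) → u' = u := by
  obtain ⟨A, hA⟩ := exists_sesqForm_eq_inner_of_bound b M hbdd
  obtain ⟨f, hf, hf_norm⟩ := exists_conjLinear_eq_inner ℓ
  have hbelow : ∀ u, ‖u‖ ≤ C⁻¹ * ‖A u‖ := by
    intro u
    rcases eq_or_ne u 0 with rfl | hu
    · simp
    rw [le_inv_mul_iff₀ hC]
    refine mul_norm_le_of_le_iSup_div hu (fun v => (b u v).re) (fun v => ?_) (hinfsup u hu)
    rw [hA, mul_comm]
    exact re_inner_le_norm (𝕜 := ℂ) v (A u)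
  have hanti : AntilipschitzWith ⟨C⁻¹, inv_nonneg.mpr hC.le⟩ A := A.antilipschitz_of_bound hbelow
  have hperp : A.rangeᗮ = ⊥ := by
    refine (Submodule.eq_bot_iff _).mpr fun v hv => by_contra fun hv0 => ?_
    have hb0 : ∀ u, b u v = 0 := fun u => by
      rw [hA, ← inner_conj_symm, (Submodule.mem_orthogonal _ _).mp hv (A u) ⟨u, rfl⟩, map_zero]
    simpa [hb0] using htrans v hv0
  obtain ⟨u, rfl⟩ := A.surjective_of_antilipschitz_of_orthogonal_eq_bot hanti hperp f
  have hsol : ∀ v, b u v = ℓ v := fun v => by rw [hA, hf]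
  refine ⟨u, hsol, hf_norm ▸ hbelow u, fun u' hu' => hanti.injective ?_⟩
  exact ext_inner_left ℂ fun v => by rw [← hA, ← hA, hu', hsol]
end

section
/- Let P be a finite-dimensional space of functions on an element K of diameter h_K, and suppose the inverse inequality ‖∇(w b_K)‖_{L²(K)} ≤ C_i h_K⁻¹ ‖w‖_{L²(K)} holds for all w ∈ P, and the bubble estimate ‖w‖_{L²(K)} ≤ C_b‖b_K^{1/2}w‖_{L²(K)}. If g ∈ L²(K) and w ∈ P satisfy (b_K w, w)_K = (∇(b_K w), G)_K + (b_K w, r)_K for some G, r ∈ L²(K), then ‖w‖_{L²(K)} ≤ C_b²(C_i h_K⁻¹ ‖G‖_{L²(K)} + ‖r‖_{L²(K)}). -/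
/-!
Taking real parts in the identity, the weighted mass `(b_K w, w)_K = ‖b_K^{1/2} w‖²` is bounded,
by Cauchy–Schwarz and `0 ≤ b_K ≤ 1`, by `‖∇(b_K w)‖ ‖G‖ + ‖w‖ ‖r‖`, hence by
`‖w‖ (C_i h_K⁻¹ ‖G‖ + ‖r‖)` after the inverse inequality. The bubble estimate bounds `‖w‖²` by
`C_b²` times the weighted mass, and dividing by `‖w‖` gives the claim.
-/

open MeasureTheory ComplexConjugate

section

variable {α : Type*} [MeasurableSpace α] {μ : Measure α}

theorem integral_norm_mul_norm_le_sqrt_mul_sqrt {E : Type*} [NormedAddCommGroup E] {f g : α → E}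
    (hf : MemLp f 2 μ) (hg : MemLp g 2 μ) :
    ∫ x, ‖f x‖ * ‖g x‖ ∂μ ≤ √(∫ x, ‖f x‖ ^ 2 ∂μ) * √(∫ x, ‖g x‖ ^ 2 ∂μ) := by
  have h2 : ENNReal.ofReal 2 = 2 := ENNReal.ofReal_ofNat 2
  have h := integral_mul_norm_le_Lp_mul_Lq Real.HolderConjugate.two_two (h2 ▸ hf) (h2 ▸ hg)
  simpa only [Real.rpow_two, Real.sqrt_eq_rpow] using h

variable {𝕜 : Type*} [RCLike 𝕜]

theorem norm_integral_inner_le_sqrt_mul_sqrt {E : Type*} [NormedAddCommGroup E]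
    [InnerProductSpace 𝕜 E] {f g : α → E} (hf : MemLp f 2 μ) (hg : MemLp g 2 μ) :
    ‖∫ x, inner 𝕜 (f x) (g x) ∂μ‖ ≤ √(∫ x, ‖f x‖ ^ 2 ∂μ) * √(∫ x, ‖g x‖ ^ 2 ∂μ) :=
  (norm_integral_le_of_norm_le (hf.norm.integrable_mul hg.norm)
    (.of_forall fun x => norm_inner_le_norm (f x) (g x))).trans
    (integral_norm_mul_norm_le_sqrt_mul_sqrt hf hg)

theorem norm_integral_sum_mul_conj_le {ι : Type*} [Fintype ι] {F G : α → ι → 𝕜}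
    (hF : MemLp F 2 μ) (hG : MemLp G 2 μ) :
    ‖∫ x, ∑ i, F x i * conj (G x i) ∂μ‖
      ≤ √(∫ x, ∑ i, ‖F x i‖ ^ 2 ∂μ) * √(∫ x, ∑ i, ‖G x i‖ ^ 2 ∂μ) := by
  let e : (ι → 𝕜) →L[𝕜] EuclideanSpace 𝕜 ι :=
    (EuclideanSpace.equiv ι 𝕜).symm.toContinuousLinearMap
  have h := norm_integral_inner_le_sqrt_mul_sqrt (𝕜 := 𝕜)
    (hG.continuousLinearMap_comp e) (hF.continuousLinearMap_comp e)
  have hinner : ∀ x, inner 𝕜 (e (G x)) (e (F x)) = ∑ i, F x i * conj (G x i) := fun x => by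
    simp [e, PiLp.inner_apply]
  have hnorm : ∀ H : α → ι → 𝕜, ∀ x, ‖e (H x)‖ ^ 2 = ∑ i, ‖H x i‖ ^ 2 := fun H x => by
    simp [e, EuclideanSpace.norm_sq_eq]
  simp only [hinner, hnorm] at h
  rwa [mul_comm]

theorem norm_integral_smul_mul_conj_le {b : α → ℝ} (hb0 : ∀ x, 0 ≤ b x) (hb1 : ∀ x, b x ≤ 1)
    {u v : α → 𝕜} (hu : MemLp u 2 μ) (hv : MemLp v 2 μ) :
    ‖∫ x, (b x • u x) * conj (v x) ∂μ‖ ≤ √(∫ x, ‖u x‖ ^ 2 ∂μ) * √(∫ x, ‖v x‖ ^ 2 ∂μ) := by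
  refine (norm_integral_le_of_norm_le (hu.norm.integrable_mul hv.norm)
    (.of_forall fun x => ?_)).trans (integral_norm_mul_norm_le_sqrt_mul_sqrt hu hv)
  rw [norm_mul, norm_smul, RCLike.norm_conj, Real.norm_of_nonneg (hb0 x), mul_assoc]
  exact mul_le_of_le_one_left (by positivity) (hb1 x)

theorem integral_smul_mul_conj_self (b : α → ℝ) (u : α → 𝕜) :
    ∫ x, (b x • u x) * conj (u x) ∂μ = ((∫ x, b x * ‖u x‖ ^ 2 ∂μ : ℝ) : 𝕜) := by
  rw [← integral_ofReal]
  congr 1 with x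
  rw [smul_mul_assoc, RCLike.mul_conj, RCLike.real_smul_eq_coe_mul]
  push_cast
  ring

end

theorem le_of_sq_le_mul {x a : ℝ} (ha : 0 ≤ a) (h : x ^ 2 ≤ x * a) : x ≤ a := by
  nlinarith

theorem bubble_efficiency_bound_general
    {n : ℕ} (K : Set (Fin n → ℝ))
    (hK : ℝ) (hKpos : 0 < hK)
    (bK : (Fin n → ℝ) → ℝ) (hb0 : ∀ x, 0 ≤ bK x) (hb1 : ∀ x, bK x ≤ 1)
    (P : Submodule ℂ ((Fin n → ℝ) → ℂ))
    (Ci Cb : ℝ) (hCi : 0 < Ci)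
    -- inverse inequality for all `w ∈ P`
    (hinv : ∀ w ∈ P,
      Real.sqrt (∫ x in K, ∑ i, ‖fderiv ℝ (fun y => bK y • w y) x (Pi.single i 1)‖ ^ 2)
        ≤ Ci * hK⁻¹ * Real.sqrt (∫ x in K, ‖w x‖ ^ 2))
    -- bubble estimate for all `w ∈ P`
    (hbub : ∀ w ∈ P, Real.sqrt (∫ x in K, ‖w x‖ ^ 2)
        ≤ Cb * Real.sqrt (∫ x in K, bK x * ‖w x‖ ^ 2))
    (w : (Fin n → ℝ) → ℂ) (hw : w ∈ P) (hwL2 : MemLp w 2 (volume.restrict K))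
    (G : (Fin n → ℝ) → Fin n → ℂ) (r : (Fin n → ℝ) → ℂ)
    (hG : MemLp G 2 (volume.restrict K)) (hr : MemLp r 2 (volume.restrict K))
    (hgradL2 : MemLp (fun x => fun i : Fin n =>
      fderiv ℝ (fun y => bK y • w y) x (Pi.single i 1)) 2 (volume.restrict K))
    -- integration-by-parts identity `(b_K w, w)_K = (∇(b_K w), G)_K + (b_K w, r)_K`
    (hident : (∫ x in K, (bK x • w x) * (starRingEnd ℂ) (w x))
      = (∫ x in K, ∑ i, (fderiv ℝ (fun y => bK y • w y) x (Pi.single i 1))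
            * (starRingEnd ℂ) (G x i))
        + ∫ x in K, (bK x • w x) * (starRingEnd ℂ) (r x)) :
    Real.sqrt (∫ x in K, ‖w x‖ ^ 2)
      ≤ Cb ^ 2 * (Ci * hK⁻¹ * Real.sqrt (∫ x in K, ∑ i, ‖G x i‖ ^ 2)
          + Real.sqrt (∫ x in K, ‖r x‖ ^ 2)) := by
  set N := √(∫ x in K, ‖w x‖ ^ 2)
  set M := Ci * hK⁻¹ * √(∫ x in K, ∑ i, ‖G x i‖ ^ 2) + √(∫ x in K, ‖r x‖ ^ 2)
  set B := ∫ x in K, bK x * ‖w x‖ ^ 2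
  rw [integral_smul_mul_conj_self] at hident
  have hweighted : B ≤ N * M :=
    calc B = (_ + _ : ℂ).re := by rw [← hident]; exact (RCLike.ofReal_re (K := ℂ) B).symm
      _ ≤ _ := (Complex.re_le_norm _).trans (norm_add_le _ _)
      _ ≤ (Ci * hK⁻¹ * N) * √(∫ x in K, ∑ i, ‖G x i‖ ^ 2) + N * √(∫ x in K, ‖r x‖ ^ 2) := by
        gcongr
        · exact (norm_integral_sum_mul_conj_le hgradL2 hG).trans
            (by gcongr; exact hinv w hw)
        · exact norm_integral_smul_mul_conj_le hb0 hb1 hwL2 hr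
      _ = N * M := by ring
  have hB : 0 ≤ B := integral_nonneg fun x => mul_nonneg (hb0 x) (sq_nonneg _)
  refine le_of_sq_le_mul (by positivity) ?_
  calc N ^ 2 ≤ (Cb * √B) ^ 2 := pow_le_pow_left₀ (Real.sqrt_nonneg _) (hbub w hw) 2
    _ = Cb ^ 2 * B := by rw [mul_pow, Real.sq_sqrt hB]
    _ ≤ Cb ^ 2 * (N * M) := by gcongr
    _ = N * (Cb ^ 2 * M) := by ring

/-- abstract element-residual efficiency argument.  With the inverse
inequality `‖∇(w b_K)‖ ≤ C_i h_K⁻¹ ‖w‖`, the bubble estimate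
`‖w‖ ≤ C_b ‖b_K^{1/2} w‖`, and the integration-by-parts identity
`(b_K w, w)_K = (∇(b_K w), G)_K + (b_K w, r)_K`, one gets
`‖w‖_{L²(K)} ≤ C_b² (C_i h_K⁻¹ ‖G‖_{L²(K)} + ‖r‖_{L²(K)})`. -/
theorem bubble_efficiency_bound
    {n : ℕ} (K : Set (Fin n → ℝ)) (hKop : IsOpen K) (hKbdd : Bornology.IsBounded K)
    (hK : ℝ) (hKpos : 0 < hK) (hdiam : Metric.diam K = hK)
    (bK : (Fin n → ℝ) → ℝ) (hb0 : ∀ x, 0 ≤ bK x) (hb1 : ∀ x, bK x ≤ 1)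
    (hbsupp : ∀ x ∉ K, bK x = 0)
    (P : Submodule ℂ ((Fin n → ℝ) → ℂ)) [FiniteDimensional ℂ P]
    (Ci Cb : ℝ) (hCi : 0 < Ci) (hCb : 0 < Cb)
    -- inverse inequality for all `w ∈ P`
    (hinv : ∀ w ∈ P,
      Real.sqrt (∫ x in K, ∑ i, ‖fderiv ℝ (fun y => bK y • w y) x (Pi.single i 1)‖ ^ 2)
        ≤ Ci * hK⁻¹ * Real.sqrt (∫ x in K, ‖w x‖ ^ 2))
    -- bubble estimate for all `w ∈ P`
    (hbub : ∀ w ∈ P, Real.sqrt (∫ x in K, ‖w x‖ ^ 2)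
        ≤ Cb * Real.sqrt (∫ x in K, bK x * ‖w x‖ ^ 2))
    (w : (Fin n → ℝ) → ℂ) (hw : w ∈ P) (hwL2 : MemLp w 2 (volume.restrict K))
    (G : (Fin n → ℝ) → Fin n → ℂ) (r : (Fin n → ℝ) → ℂ)
    (hG : MemLp G 2 (volume.restrict K)) (hr : MemLp r 2 (volume.restrict K))
    (hgradL2 : MemLp (fun x => fun i : Fin n =>
      fderiv ℝ (fun y => bK y • w y) x (Pi.single i 1)) 2 (volume.restrict K))
    -- integration-by-parts identity `(b_K w, w)_K = (∇(b_K w), G)_K + (b_K w, r)_K`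
    (hident : (∫ x in K, (bK x • w x) * (starRingEnd ℂ) (w x))
      = (∫ x in K, ∑ i, (fderiv ℝ (fun y => bK y • w y) x (Pi.single i 1))
            * (starRingEnd ℂ) (G x i))
        + ∫ x in K, (bK x • w x) * (starRingEnd ℂ) (r x)) :
    Real.sqrt (∫ x in K, ‖w x‖ ^ 2)
      ≤ Cb ^ 2 * (Ci * hK⁻¹ * Real.sqrt (∫ x in K, ∑ i, ‖G x i‖ ^ 2)
          + Real.sqrt (∫ x in K, ‖r x‖ ^ 2)) :=
  bubble_efficiency_bound_general K hK hKpos bK hb0 hb1 P Ci Cb hCi hinv hbub w hw hwL2 G r hG hr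
    hgradL2 hident
end
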